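/- Let h, k ≥ 1 be natural numbers. The one-relator presented group ⟨x, y | x^{1+hk}(y x^{−h})^k⟩ is isomorphic to the torus knot group ⟨s, t | s^k t^{−(hk+1)}⟩ (i.e. the group with presentation ⟨s, t | s^k = t^{hk+1}⟩). -/
import Mathlib

namespace Stmt9

/-- Generators `x`, `y` of the free group `F₂`. -/
def x : FreeGroup (Fin 2) := FreeGroup.of 0
def y : FreeGroup (Fin 2) := FreeGroup.of 1

lemma rel_eq_one {rels : Set (FreeGroup (Fin 2))} {r : FreeGroup (Fin 2)} (hr : r ∈ rels) :
    PresentedGroup.mk rels r = 1 := by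
  exact (QuotientGroup.eq_one_iff r).mpr (Subgroup.subset_normalClosure hr)

/-- The one-relator group `⟨x, y | x^{1+hk}(y x^{−h})^k⟩` is isomorphic to the
torus knot group `⟨s, t | s^k t^{−(hk+1)}⟩`, i.e. `⟨s, t | s^k = t^{hk+1}⟩`. -/
theorem stmt9 (h k : ℕ) (hh : 1 ≤ h) (hk : 1 ≤ k) :
    Nonempty
      (PresentedGroup ({x ^ (1 + h * k) * (y * (x ^ h)⁻¹) ^ k} : Set (FreeGroup (Fin 2))) ≃*
        PresentedGroup ({x ^ k * (y ^ (h * k + 1))⁻¹} : Set (FreeGroup (Fin 2)))) := by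
  set relA : Set (FreeGroup (Fin 2)) := {x ^ (1 + h * k) * (y * (x ^ h)⁻¹) ^ k}
  set relB : Set (FreeGroup (Fin 2)) := {x ^ k * (y ^ (h * k + 1))⁻¹}
  set A1 : PresentedGroup relA := PresentedGroup.of 0
  set A2 : PresentedGroup relA := PresentedGroup.of 1
  set B1 : PresentedGroup relB := PresentedGroup.of 0
  set B2 : PresentedGroup relB := PresentedGroup.of 1
  have hA : A1 ^ (1 + h * k) * (A2 * (A1 ^ h)⁻¹) ^ k = 1 := by
    have := rel_eq_one (rels := relA) (r := x ^ (1 + h * k) * (y * (x ^ h)⁻¹) ^ k) rfl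
    simpa [x, y, A1, A2, PresentedGroup.of] using this
  have hB : B1 ^ k * (B2 ^ (h * k + 1))⁻¹ = 1 := by
    have := rel_eq_one (rels := relB) (r := x ^ k * (y ^ (h * k + 1))⁻¹) rfl
    simpa [x, y, B1, B2, PresentedGroup.of] using this
  set fAB : Fin 2 → PresentedGroup relB := ![B2⁻¹, B1 * (B2 ^ h)⁻¹]
  set fBA : Fin 2 → PresentedGroup relA := ![A2 * (A1 ^ h)⁻¹, A1⁻¹]
  have hfAB : ∀ r ∈ relA, FreeGroup.lift fAB r = 1 := by
    intro r hr
    rw [Set.mem_singleton_iff] at hr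
    subst hr
    have hB1 : B1 ^ k = B2 ^ (h * k + 1) := by
      rw [← mul_inv_eq_one]; exact hB
    simp only [x, y, map_mul, map_pow, map_inv, FreeGroup.lift_apply_of, fAB,
      Matrix.cons_val_zero, Matrix.cons_val_one, Matrix.head_cons]
    rw [show B1 * (B2 ^ h)⁻¹ * ((B2⁻¹) ^ h)⁻¹ = B1 by group]
    rw [hB1]
    group
  have hfBA : ∀ r ∈ relB, FreeGroup.lift fBA r = 1 := by
    intro r hr
    rw [Set.mem_singleton_iff] at hr
    subst hr
    have hA1 : (A2 * (A1 ^ h)⁻¹) ^ k = (A1 ^ (1 + h * k))⁻¹ := by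
      exact (inv_eq_of_mul_eq_one_right hA).symm
    simp only [x, y, map_mul, map_pow, map_inv, FreeGroup.lift_apply_of, fBA,
      Matrix.cons_val_zero, Matrix.cons_val_one, Matrix.head_cons]
    rw [hA1]
    group
  set φ := PresentedGroup.toGroup hfAB
  set ψ := PresentedGroup.toGroup hfBA
  have h1 : ψ.comp φ = MonoidHom.id _ := by
    apply PresentedGroup.ext
    intro i
    fin_cases i <;>
      simp [φ, ψ, fAB, fBA, PresentedGroup.toGroup.of, A1, A2, B1, B2] <;> group
  have h2 : φ.comp ψ = MonoidHom.id _ := by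
    apply PresentedGroup.ext
    intro i
    fin_cases i <;>
      simp [φ, ψ, fAB, fBA, PresentedGroup.toGroup.of, A1, A2, B1, B2] <;> group
  exact ⟨MonoidHom.toMulEquiv φ ψ h1 h2⟩

end Stmt9
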